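/- arXiv:2404.16519 — 2 statements merged into one kernel-verified Lean document; each statement's English description precedes it below -/
import Mathlib

section
/- Let g : [0,∞) → [0,∞) be measurable with ∫₀^∞ g(t)/√t dt < ∞. Then for any θ, λ > 0, ∫₀^∞ √(λ/x³) g(λ(x−θ)²/(θ²x)) dx = ∫₀^∞ g(t)/√t dt; in particular the normalization constant of the inverse Gaussian type distribution is independent of θ and λ. -/
open MeasureTheory

private lemma igt_id1 (lam θ x G : ℝ) (hlam : 0 < lam) (hθ : 0 < θ) (hx : θ < x) :
    |-(θ ^ 2 / x ^ 2)| * (Real.sqrt (lam / (θ ^ 2 / x) ^ 3) * G)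
      = Real.sqrt lam / (θ * Real.sqrt x) * G := by
  have hx0 : (0:ℝ) < x := hθ.trans hx
  obtain ⟨u, hu, rfl⟩ : ∃ u, 0 < u ∧ x = u ^ 2 :=
    ⟨Real.sqrt x, Real.sqrt_pos.mpr hx0, (Real.sq_sqrt hx0.le).symm⟩
  obtain ⟨v, hv, rfl⟩ : ∃ v, 0 < v ∧ lam = v ^ 2 :=
    ⟨Real.sqrt lam, Real.sqrt_pos.mpr hlam, (Real.sq_sqrt hlam.le).symm⟩
  have h1 : v ^ 2 / (θ ^ 2 / u ^ 2) ^ 3 = (v * (u ^ 2 * u) / θ ^ 3) ^ 2 := by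
    field_simp
  rw [h1, Real.sqrt_sq (by positivity), Real.sqrt_sq hv.le, Real.sqrt_sq hu.le,
    abs_neg, abs_of_pos (by positivity)]
  field_simp

private lemma igt_id2 (lam θ x G : ℝ) (hlam : 0 < lam) (hθ : 0 < θ) (hx : θ < x) :
    |lam * (x - θ) * (x + θ) / (θ ^ 2 * x ^ 2)|
        * (G / Real.sqrt (lam * (x - θ) ^ 2 / (θ ^ 2 * x)))
      = Real.sqrt (lam / x ^ 3) * G + Real.sqrt lam / (θ * Real.sqrt x) * G := by
  have hx0 : (0:ℝ) < x := hθ.trans hx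
  obtain ⟨u, hu, rfl⟩ : ∃ u, 0 < u ∧ x = u ^ 2 :=
    ⟨Real.sqrt x, Real.sqrt_pos.mpr hx0, (Real.sq_sqrt hx0.le).symm⟩
  obtain ⟨v, hv, rfl⟩ : ∃ v, 0 < v ∧ lam = v ^ 2 :=
    ⟨Real.sqrt lam, Real.sqrt_pos.mpr hlam, (Real.sq_sqrt hlam.le).symm⟩
  have h1 : 0 < u ^ 2 - θ := sub_pos.mpr hx
  have hB : v ^ 2 * (u ^ 2 - θ) ^ 2 / (θ ^ 2 * u ^ 2) = (v * (u ^ 2 - θ) / (θ * u)) ^ 2 := by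
    field_simp
  have hA : v ^ 2 / (u ^ 2) ^ 3 = (v / (u ^ 2 * u)) ^ 2 := by
    field_simp
  have habs : 0 < v ^ 2 * (u ^ 2 - θ) * (u ^ 2 + θ) / (θ ^ 2 * (u ^ 2) ^ 2) :=
    div_pos (mul_pos (mul_pos (pow_pos hv 2) h1) (by positivity)) (by positivity)
  rw [hA, hB, Real.sqrt_sq (le_of_lt (div_pos (mul_pos hv h1) (mul_pos hθ hu))),
    Real.sqrt_sq (by positivity), Real.sqrt_sq hv.le, Real.sqrt_sq hu.le,
    abs_of_pos habs]
  field_simp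
  ring


theorem igt_normalization_independent
    (g : ℝ → ℝ) (hg : Measurable g) (hg0 : ∀ t, 0 ≤ t → 0 ≤ g t)
    (hint : IntegrableOn (fun t => g t / Real.sqrt t) (Set.Ioi (0 : ℝ)))
    (θ lam : ℝ) (hθ : 0 < θ) (hlam : 0 < lam) :
    ∫ x in Set.Ioi (0 : ℝ),
        Real.sqrt (lam / x ^ 3) * g (lam * (x - θ) ^ 2 / (θ ^ 2 * x)) =
      ∫ t in Set.Ioi (0 : ℝ), g t / Real.sqrt t := by
  have hθ0 : θ ≠ 0 := hθ.ne'
  have hlam0 : lam ≠ 0 := hlam.ne'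
  set φ : ℝ → ℝ := fun x => lam * (x - θ) ^ 2 / (θ ^ 2 * x) with hφdef
  set F : ℝ → ℝ := fun x => Real.sqrt (lam / x ^ 3) * g (φ x) with hFdef
  set corr : ℝ → ℝ := fun x => Real.sqrt lam / (θ * Real.sqrt x) * g (φ x) with hcorrdef
  set φ' : ℝ → ℝ := fun x => lam * (x - θ) * (x + θ) / (θ ^ 2 * x ^ 2) with hφ'def
  -- positivity of φ on positive reals
  have hφnn : ∀ x : ℝ, 0 < x → 0 ≤ φ x := by
    intro x hx
    have : (0:ℝ) ≤ lam * (x - θ) ^ 2 := by positivity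
    exact div_nonneg this (by positivity)
  -- derivative of φ on Ioi θ
  have hderiv : ∀ x ∈ Set.Ioi θ, HasDerivWithinAt φ (φ' x) (Set.Ioi θ) x := by
    intro x hx
    have hxθ : θ < x := hx
    have hx0 : (0:ℝ) < x := hθ.trans hxθ
    have h1 : HasDerivAt (fun x : ℝ => lam * (x - θ) ^ 2) (lam * (2 * (x - θ))) x := by
      have := (((hasDerivAt_id x).sub_const θ).pow 2).const_mul lam
      simpa using this
    have h2 : HasDerivAt (fun x : ℝ => θ ^ 2 * x) (θ ^ 2) x := by
      simpa using (hasDerivAt_id x).const_mul (θ ^ 2)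
    have h3 := h1.div h2 (by positivity)
    have heq : (lam * (2 * (x - θ)) * (θ ^ 2 * x) - lam * (x - θ) ^ 2 * θ ^ 2) / (θ ^ 2 * x) ^ 2
        = lam * (x - θ) * (x + θ) / (θ ^ 2 * x ^ 2) := by
      rw [div_eq_div_iff (by positivity) (by positivity)]
      ring
    rw [heq] at h3
    exact h3.hasDerivWithinAt
  -- injectivity of φ on Ioi θ
  have hinj : Set.InjOn φ (Set.Ioi θ) := by
    intro a ha b hb hab
    have ha' : θ < a := ha
    have hb' : θ < b := hb
    have ha0 : (0:ℝ) < a := hθ.trans ha'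
    have hb0 : (0:ℝ) < b := hθ.trans hb'
    rw [hφdef] at hab
    simp only at hab
    rw [div_eq_div_iff (by positivity) (by positivity)] at hab
    have h2 : lam * θ ^ 2 * ((a - b) * (a * b - θ ^ 2)) = 0 := by linear_combination hab
    have h3 : (a - b) * (a * b - θ ^ 2) = 0 := by
      have := mul_eq_zero.mp h2
      rcases this with h | h
      · exact absurd h (by positivity)
      · exact h
    have h4 : a * b - θ ^ 2 > 0 := by nlinarith
    have h5 : a - b = 0 := by
      rcases mul_eq_zero.mp h3 with h | h
      · exact h
      · exact absurd h h4.ne'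
    linarith
  -- image of φ
  have himg : φ '' Set.Ioi θ = Set.Ioi 0 := by
    apply Set.eq_of_subset_of_subset
    · rintro t ⟨x, hx, rfl⟩
      have hx' : θ < x := hx
      have hx0 : (0:ℝ) < x := hθ.trans hx'
      have hnum : 0 < lam * (x - θ) ^ 2 := by
        have : x - θ ≠ 0 := sub_ne_zero.mpr hx'.ne'
        positivity
      exact div_pos hnum (by positivity)
    · intro t ht
      have ht0 : (0:ℝ) < t := ht
      set s := Real.sqrt (t ^ 2 * θ ^ 4 + 4 * lam * t * θ ^ 3) with hsdef
      have hs0 : 0 ≤ s := Real.sqrt_nonneg _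
      have hs2 : s ^ 2 = t ^ 2 * θ ^ 4 + 4 * lam * t * θ ^ 3 := Real.sq_sqrt (by positivity)
      set x := θ + (t * θ ^ 2 + s) / (2 * lam) with hxdef
      have hxθ : θ < x := by
        have h1 : 0 < t * θ ^ 2 + s := by nlinarith [mul_pos ht0 (pow_pos hθ 2)]
        have h2 : 0 < (t * θ ^ 2 + s) / (2 * lam) := div_pos h1 (by positivity)
        rw [hxdef]
        linarith
      have hx0 : (0:ℝ) < x := hθ.trans hxθ
      refine ⟨x, hxθ, ?_⟩
      show lam * (x - θ) ^ 2 / (θ ^ 2 * x) = t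
      rw [div_eq_iff (by positivity)]
      rw [hxdef]
      field_simp
      nlinarith [hs2]
  -- main change of variables
  have key := integral_image_eq_integral_abs_deriv_smul measurableSet_Ioi hderiv hinj
      (fun t => g t / Real.sqrt t)
  rw [himg] at key
  show (∫ x in Set.Ioi (0:ℝ), F x) = ∫ t in Set.Ioi (0:ℝ), g t / Real.sqrt t
  -- φ is invariant under x ↦ θ²/x
  have hφinv : ∀ x ∈ Set.Ioi θ, φ (θ ^ 2 / x) = φ x := by
    intro x hx
    have hx0 : (0:ℝ) < x := hθ.trans hx
    show lam * (θ ^ 2 / x - θ) ^ 2 / (θ ^ 2 * (θ ^ 2 / x)) = lam * (x - θ) ^ 2 / (θ ^ 2 * x)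
    rw [div_eq_div_iff (by positivity) (by positivity)]
    field_simp
    ring
  -- the inversion map
  have hderivI : ∀ x ∈ Set.Ioi θ, HasDerivWithinAt (fun x : ℝ => θ ^ 2 / x)
      (-(θ ^ 2 / x ^ 2)) (Set.Ioi θ) x := by
    intro x hx
    have hx0 : x ≠ 0 := (hθ.trans hx).ne'
    have h2 := (hasDerivAt_inv hx0).const_mul (θ ^ 2)
    have h3 : θ ^ 2 * -(x ^ 2)⁻¹ = -(θ ^ 2 / x ^ 2) := by field_simp
    rw [h3] at h2
    have h4 : (fun y : ℝ => θ ^ 2 * y⁻¹) = fun y : ℝ => θ ^ 2 / y := by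
      funext y; rw [div_eq_mul_inv]
    rw [h4] at h2
    exact h2.hasDerivWithinAt
  have hinjI : Set.InjOn (fun x : ℝ => θ ^ 2 / x) (Set.Ioi θ) := by
    intro a ha b hb hab
    have ha0 : (0:ℝ) < a := hθ.trans ha
    have hb0 : (0:ℝ) < b := hθ.trans hb
    simp only at hab
    rw [div_eq_div_iff ha0.ne' hb0.ne'] at hab
    exact mul_left_cancel₀ (pow_ne_zero 2 hθ0) hab.symm
  have himgI : (fun x : ℝ => θ ^ 2 / x) '' Set.Ioi θ = Set.Ioo 0 θ := by
    apply Set.eq_of_subset_of_subset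
    · rintro y ⟨x, hx, rfl⟩
      have hx' : θ < x := hx
      have hx0 : (0:ℝ) < x := hθ.trans hx'
      constructor
      · positivity
      · rw [div_lt_iff₀ hx0]
        nlinarith
    · rintro y ⟨hy0, hyθ⟩
      refine ⟨θ ^ 2 / y, ?_, ?_⟩
      · show θ < θ ^ 2 / y
        rw [lt_div_iff₀ hy0]
        nlinarith
      · show θ ^ 2 / (θ ^ 2 / y) = y
        rw [div_div_eq_mul_div, mul_div_assoc, mul_div_cancel₀ _ (pow_ne_zero 2 hθ0)]
  have keyI := integral_image_eq_integral_abs_deriv_smul measurableSet_Ioi hderivI hinjI F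
  rw [himgI] at keyI
  -- pointwise identities
  have hEq1 : Set.EqOn (fun x => |-(θ ^ 2 / x ^ 2)| • F (θ ^ 2 / x)) corr (Set.Ioi θ) := by
    intro x hx
    simp only [smul_eq_mul]
    show |-(θ ^ 2 / x ^ 2)| * (Real.sqrt (lam / (θ ^ 2 / x) ^ 3) * g (φ (θ ^ 2 / x)))
        = Real.sqrt lam / (θ * Real.sqrt x) * g (φ x)
    rw [hφinv x hx]
    exact igt_id1 lam θ x (g (φ x)) hlam hθ hx
  have hEq2 : Set.EqOn (fun x => |φ' x| • (g (φ x) / Real.sqrt (φ x)))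
      (fun x => F x + corr x) (Set.Ioi θ) := by
    intro x hx
    simp only [smul_eq_mul]
    exact igt_id2 lam θ x (g (φ x)) hlam hθ hx
  -- measurability
  have hφm : Measurable φ := by
    apply Measurable.div
    · exact measurable_const.mul ((measurable_id.sub_const θ).pow_const 2)
    · exact measurable_const.mul measurable_id
  have hFm : Measurable F :=
    (Real.continuous_sqrt.measurable.comp (measurable_const.div (measurable_id.pow_const 3))).mul
      (hg.comp hφm)
  have hcorrm : Measurable corr :=
    (measurable_const.div (measurable_const.mul Real.continuous_sqrt.measurable)).mul (hg.comp hφm)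
  -- integrability
  have hIntKey : IntegrableOn (fun x => |φ' x| • (g (φ x) / Real.sqrt (φ x))) (Set.Ioi θ) :=
    (integrableOn_image_iff_integrableOn_abs_deriv_smul measurableSet_Ioi hderiv hinj
      (fun t => g t / Real.sqrt t)).mp (by rw [himg]; exact hint)
  have hIntSum : IntegrableOn (fun x => F x + corr x) (Set.Ioi θ) :=
    hIntKey.congr_fun hEq2 measurableSet_Ioi
  have hFnn : ∀ x ∈ Set.Ioi θ, 0 ≤ F x := by
    intro x hx
    exact mul_nonneg (Real.sqrt_nonneg _) (hg0 _ (hφnn x (hθ.trans hx)))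
  have hcorrnn : ∀ x ∈ Set.Ioi θ, 0 ≤ corr x := by
    intro x hx
    exact mul_nonneg (by positivity) (hg0 _ (hφnn x (hθ.trans hx)))
  have hIntF : IntegrableOn F (Set.Ioi θ) := by
    apply Integrable.mono' hIntSum hFm.aestronglyMeasurable.restrict
    filter_upwards [ae_restrict_mem measurableSet_Ioi] with x hx
    rw [Real.norm_eq_abs, abs_of_nonneg (hFnn x hx)]
    have := hcorrnn x hx
    linarith
  have hIntCorr : IntegrableOn corr (Set.Ioi θ) := by
    apply Integrable.mono' hIntSum hcorrm.aestronglyMeasurable.restrict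
    filter_upwards [ae_restrict_mem measurableSet_Ioi] with x hx
    rw [Real.norm_eq_abs, abs_of_nonneg (hcorrnn x hx)]
    have := hFnn x hx
    linarith
  have hIntFIoo : IntegrableOn F (Set.Ioo 0 θ) := by
    rw [← himgI,
      integrableOn_image_iff_integrableOn_abs_deriv_smul measurableSet_Ioi hderivI hinjI F]
    exact hIntCorr.congr_fun hEq1.symm measurableSet_Ioi
  have hIntFIci : IntegrableOn F (Set.Ici θ) := by
    rw [integrableOn_Ici_iff_integrableOn_Ioi]
    exact hIntF
  have hdisj : Disjoint (Set.Ioo (0:ℝ) θ) (Set.Ici θ) := by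
    rw [Set.disjoint_left]
    rintro x ⟨_, h2⟩ h3
    exact absurd h3 (not_le.mpr h2)
  calc (∫ x in Set.Ioi (0:ℝ), F x)
      = ∫ x in Set.Ioo 0 θ ∪ Set.Ici θ, F x := by rw [Set.Ioo_union_Ici_eq_Ioi hθ]
    _ = (∫ x in Set.Ioo 0 θ, F x) + ∫ x in Set.Ici θ, F x :=
        setIntegral_union hdisj measurableSet_Ici hIntFIoo hIntFIci
    _ = (∫ x in Set.Ioi θ, corr x) + ∫ x in Set.Ioi θ, F x := by
        rw [integral_Ici_eq_integral_Ioi, keyI,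
          setIntegral_congr_fun measurableSet_Ioi hEq1]
    _ = ∫ x in Set.Ioi θ, (F x + corr x) := by
        rw [← integral_add hIntCorr hIntF]
        congr 1
        funext x
        ring
    _ = ∫ x in Set.Ioi θ, |φ' x| • (g (φ x) / Real.sqrt (φ x)) :=
        (setIntegral_congr_fun measurableSet_Ioi hEq2).symm
    _ = ∫ t in Set.Ioi (0:ℝ), g t / Real.sqrt t := key.symm
end

section
/- If g : [0,∞) → [0,∞) is measurable and ∫₀^∞ g(t) t^{−1/2} dt < ∞, then ∫₀^∞ g(t) (t+1)^{−1/2} dt < ∞; consequently the expectation of the IGT distribution always exists and equals θ, independent of g. -/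
/-!
The substitution `y = (x - θ) / √x` maps `(0, ∞)` onto `ℝ`, with `dy = (x + θ) / (2 x √x) dx`,
and turns the argument of `g` into `(√λ y / θ) ^ 2`; after `t = y ^ 2` this gives
`∫ (x + θ) p(x) dx = 2θ`. The inversion `x ↦ θ ^ 2 / x` leaves the argument of `g` unchanged and
carries `x p(x) dx` to `θ p(x) dx`, so the two halves `∫ x p(x) dx` and `θ ∫ p(x) dx` are equal,
each to `θ`. The first claim is domination of `1 / √(t + 1)` by `1 / √t`.
-/

open MeasureTheory Set

section ChangeOfVariables

variable {E : Type*} [NormedAddCommGroup E]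

theorem integrable_of_even {f : ℝ → E} (hf : ∀ x, f (-x) = f x)
    (h : IntegrableOn f (Ioi 0)) : Integrable f := by
  have hIic : IntegrableOn f (Iic 0) := by
    have hneg : MeasurableEmbedding (fun x : ℝ => -x) := (Homeomorph.neg ℝ).measurableEmbedding
    rw [← Measure.map_neg_eq_self (volume : Measure ℝ), hneg.integrableOn_map_iff]
    simpa [Function.comp_def, hf] using (integrableOn_Ici_iff_integrableOn_Ioi).mpr h
  simpa using hIic.union h

variable [NormedSpace ℝ E]

theorem integral_comp_div_Ioi {c : ℝ} (hc : 0 < c) (f : ℝ → E) :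
    ∫ x in Ioi 0, (c / x ^ 2) • f (c / x) = ∫ x in Ioi 0, f x := by
  have himage : (fun x => c / x) '' Ioi 0 = Ioi 0 :=
    Subset.antisymm (image_subset_iff.mpr fun x hx => div_pos hc hx)
      fun x hx => ⟨c / x, div_pos hc hx, div_div_cancel₀ hc.ne'⟩
  have hderiv : ∀ x ∈ Ioi (0 : ℝ), HasDerivWithinAt (fun x => c / x) (-(c / x ^ 2)) (Ioi 0) x :=
    fun x hx => by
      simpa [div_eq_mul_inv] using ((hasDerivAt_inv (ne_of_gt hx)).const_mul c).hasDerivWithinAt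
  have hinj : InjOn (fun x => c / x) (Ioi 0) := fun x _ y _ h =>
    inv_injective (mul_left_cancel₀ hc.ne' h)
  conv_rhs => rw [← himage, integral_image_eq_integral_abs_deriv_smul measurableSet_Ioi hderiv hinj]
  refine setIntegral_congr_fun measurableSet_Ioi fun x hx => ?_
  rw [abs_neg, abs_of_pos (by have := mem_Ioi.mp hx; positivity)]

theorem hasDerivAt_sub_div_sqrt (θ : ℝ) {x : ℝ} (hx : 0 < x) :
    HasDerivAt (fun x => (x - θ) / √x) ((x + θ) / (2 * x * √x)) x := by
  have hs : 0 < √x := Real.sqrt_pos.mpr hx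
  refine (((hasDerivAt_id' x).sub_const θ).div (Real.hasDerivAt_sqrt hx.ne') hs.ne').congr_deriv ?_
  field_simp
  rw [Real.sq_sqrt hx.le]
  ring

theorem add_div_two_mul_mul_sqrt_pos {θ x : ℝ} (hθ : 0 ≤ θ) (hx : 0 < x) :
    0 < (x + θ) / (2 * x * √x) := by
  have := Real.sqrt_pos.mpr hx
  positivity

theorem strictMonoOn_sub_div_sqrt {θ : ℝ} (hθ : 0 ≤ θ) :
    StrictMonoOn (fun x => (x - θ) / √x) (Ioi 0) := by
  intro a ha b hb hab
  have ha' : 0 < √a := Real.sqrt_pos.mpr ha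
  have hab' : √a < √b := Real.sqrt_lt_sqrt (le_of_lt ha) hab
  have hsplit : ∀ x : ℝ, 0 < x → (x - θ) / √x = √x - θ / √x := fun x hx => by
    have := Real.sqrt_pos.mpr hx
    field_simp
    rw [Real.sq_sqrt hx.le]
  simp only [hsplit a ha, hsplit b hb]
  have : θ / √b ≤ θ / √a := div_le_div_of_nonneg_left hθ ha' hab'.le
  linarith

theorem image_sub_div_sqrt_Ioi {θ : ℝ} (hθ : 0 < θ) :
    (fun x => (x - θ) / √x) '' Ioi 0 = univ := by
  refine eq_univ_of_forall fun y => ?_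
  -- `√x` is the positive root of `s ^ 2 - y * s - θ`
  set s := (y + √(y ^ 2 + 4 * θ)) / 2
  have hr : √(y ^ 2 + 4 * θ) ^ 2 = y ^ 2 + 4 * θ := Real.sq_sqrt (by positivity)
  have hs : 0 < s := by
    have : |y| < √(y ^ 2 + 4 * θ) := by
      rw [← Real.sqrt_sq_eq_abs]; exact Real.sqrt_lt_sqrt (sq_nonneg y) (by linarith)
    have := neg_abs_le y
    simp only [s]; linarith
  refine ⟨s ^ 2, pow_pos hs 2, ?_⟩
  simp only [Real.sqrt_sq hs.le]
  field_simp
  simp only [s]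
  linear_combination hr / 4

theorem integrableOn_Ioi_comp_sub_div_sqrt_iff {θ : ℝ} (hθ : 0 < θ) (f : ℝ → E) :
    IntegrableOn (fun x => ((x + θ) / (2 * x * √x)) • f ((x - θ) / √x)) (Ioi 0) ↔
      Integrable f := by
  rw [← integrableOn_univ, ← image_sub_div_sqrt_Ioi hθ,
    integrableOn_image_iff_integrableOn_abs_deriv_smul measurableSet_Ioi
      (fun x hx => (hasDerivAt_sub_div_sqrt θ hx).hasDerivWithinAt)
      (strictMonoOn_sub_div_sqrt hθ.le).injOn]
  refine integrableOn_congr_fun (fun x hx => ?_) measurableSet_Ioi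
  simp only [abs_of_pos (add_div_two_mul_mul_sqrt_pos hθ.le hx)]

theorem integral_Ioi_comp_sub_div_sqrt {θ : ℝ} (hθ : 0 < θ) (f : ℝ → E) :
    ∫ x in Ioi 0, ((x + θ) / (2 * x * √x)) • f ((x - θ) / √x) = ∫ y, f y := by
  conv_rhs => rw [← setIntegral_univ, ← image_sub_div_sqrt_Ioi hθ,
    integral_image_eq_integral_abs_deriv_smul measurableSet_Ioi
      (fun x hx => (hasDerivAt_sub_div_sqrt θ hx).hasDerivWithinAt)
      (strictMonoOn_sub_div_sqrt hθ.le).injOn]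
  refine setIntegral_congr_fun measurableSet_Ioi fun x hx => ?_
  simp only [abs_of_pos (add_div_two_mul_mul_sqrt_pos hθ.le hx)]

end ChangeOfVariables

theorem eqOn_two_mul_comp_sq (g : ℝ → ℝ) :
    EqOn (fun x => (|(2 : ℝ)| * x ^ ((2 : ℝ) - 1)) • (g (x ^ (2 : ℝ)) / √(x ^ (2 : ℝ))))
      (fun x => 2 * g (x ^ 2)) (Ioi 0) := fun x hx => by
  have hx : 0 < x := hx
  norm_num [Real.sqrt_sq hx.le]
  field_simp

theorem integrable_comp_sq {g : ℝ → ℝ} (hg : IntegrableOn (fun t => g t / √t) (Ioi 0)) :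
    Integrable (fun y => g (y ^ 2)) := by
  refine integrable_of_even (fun y => by rw [neg_sq]) ?_
  rw [← integrableOn_Ioi_comp_rpow_iff _ two_ne_zero,
    integrableOn_congr_fun (eqOn_two_mul_comp_sq g) measurableSet_Ioi] at hg
  simpa [IntegrableOn] using hg.const_mul 2⁻¹

theorem integral_comp_sq (g : ℝ → ℝ) : ∫ y, g (y ^ 2) = ∫ t in Ioi 0, g t / √t := by
  rw [← integral_comp_rpow_Ioi _ two_ne_zero,
    setIntegral_congr_fun measurableSet_Ioi (eqOn_two_mul_comp_sq g),
    integral_const_mul, ← integral_comp_abs (f := fun y => g (y ^ 2))]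
  simp only [sq_abs]

theorem integrableOn_div_sqrt_add {g : ℝ → ℝ} {a : ℝ} (ha : 0 ≤ a)
    (hg : IntegrableOn (fun t => g t / √t) (Ioi 0)) :
    IntegrableOn (fun t => g t / √(t + a)) (Ioi 0) := by
  have hw : ∀ᵐ t ∂volume.restrict (Ioi 0), ‖√t / √(t + a)‖ ≤ 1 := by
    refine ae_restrict_of_forall_mem measurableSet_Ioi fun t ht => ?_
    have ht : 0 < t := ht
    rw [Real.norm_of_nonneg (by positivity), div_le_one (Real.sqrt_pos.mpr (by linarith))]
    exact Real.sqrt_le_sqrt (by linarith)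
  refine integrableOn_congr_fun (fun t ht => ?_) measurableSet_Ioi |>.mp
    (hg.bdd_mul (by fun_prop : Measurable _).aestronglyMeasurable hw)
  have ht : 0 < √t := Real.sqrt_pos.mpr ht
  field_simp

theorem integrableOn_mul_of_abs_le_mul_add {f w : ℝ → ℝ} {θ M : ℝ} (hθ : 0 < θ)
    (hw : Measurable w) (hwM : ∀ x ∈ Ioi 0, |w x| ≤ M * (x + θ))
    (hf : IntegrableOn (fun x => (x + θ) * f x) (Ioi 0)) :
    IntegrableOn (fun x => w x * f x) (Ioi 0) := by
  have hbound : ∀ᵐ x ∂volume.restrict (Ioi 0), ‖w x / (x + θ)‖ ≤ M := by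
    refine ae_restrict_of_forall_mem measurableSet_Ioi fun x hx => ?_
    have hxθ : 0 < x + θ := by have : 0 < x := hx; linarith
    rw [Real.norm_eq_abs, abs_div, abs_of_pos hxθ, div_le_iff₀ hxθ]
    exact hwM x hx
  refine integrableOn_congr_fun (fun x hx => ?_) measurableSet_Ioi |>.mp
    (hf.bdd_mul (by fun_prop : Measurable _).aestronglyMeasurable hbound)
  have hx : x + θ ≠ 0 := by have : 0 < x := hx; linarith
  field_simp

/-- The IGT density `p(x | θ, lam)` without its normalising factor `C⁻¹`. -/
noncomputable def igtKernel (g : ℝ → ℝ) (θ lam x : ℝ) : ℝ :=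
  √(lam / x ^ 3) * g (lam * (x - θ) ^ 2 / (θ ^ 2 * x))

theorem mul_igtKernel_sq_div (g : ℝ → ℝ) {θ lam x : ℝ} (hθ : 0 < θ) (hx : 0 < x) :
    θ ^ 2 / x ^ 2 * (θ ^ 2 / x * igtKernel g θ lam (θ ^ 2 / x)) = θ * igtKernel g θ lam x := by
  have hsqrt : √(lam / (θ ^ 2 / x) ^ 3) = x ^ 3 / θ ^ 3 * √(lam / x ^ 3) := by
    rw [← Real.sqrt_sq (by positivity : 0 ≤ x ^ 3 / θ ^ 3), ← Real.sqrt_mul (sq_nonneg _)]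
    congr 1
    field_simp
  have harg : lam * (θ ^ 2 / x - θ) ^ 2 / (θ ^ 2 * (θ ^ 2 / x)) =
      lam * (x - θ) ^ 2 / (θ ^ 2 * x) := by
    field_simp
    ring
  simp only [igtKernel, hsqrt, harg]
  field_simp

theorem add_mul_igtKernel (g : ℝ → ℝ) {θ lam x : ℝ} (hθ : 0 < θ) (hlam : 0 ≤ lam) (hx : 0 < x) :
    (x + θ) * igtKernel g θ lam x =
      2 * √lam * (((x + θ) / (2 * x * √x)) * g ((√lam / θ * ((x - θ) / √x)) ^ 2)) := by
  have hs : 0 < √x := Real.sqrt_pos.mpr hx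
  have hsqrt : √(lam / x ^ 3) = √lam / (x * √x) := by
    rw [Real.sqrt_div' _ (by positivity), show x ^ 3 = x ^ 2 * x by ring,
      Real.sqrt_mul (sq_nonneg _), Real.sqrt_sq hx.le]
  have harg : (√lam / θ * ((x - θ) / √x)) ^ 2 = lam * (x - θ) ^ 2 / (θ ^ 2 * x) := by
    rw [mul_pow, div_pow, div_pow, Real.sq_sqrt hlam, Real.sq_sqrt hx.le]
    field_simp
  simp only [igtKernel, hsqrt, harg]
  field_simp

section IGT

variable {g : ℝ → ℝ} {θ lam : ℝ}

theorem integrableOn_add_mul_igtKernel (hg : IntegrableOn (fun t => g t / √t) (Ioi 0))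
    (hθ : 0 < θ) (hlam : 0 < lam) :
    IntegrableOn (fun x => (x + θ) * igtKernel g θ lam x) (Ioi 0) := by
  have hb : √lam / θ ≠ 0 := by have := Real.sqrt_pos.mpr hlam; positivity
  have h := ((integrableOn_Ioi_comp_sub_div_sqrt_iff hθ _).mpr
    ((integrable_comp_sq hg).comp_mul_left' hb)).const_mul (2 * √lam)
  refine (integrableOn_congr_fun (fun x hx => ?_) measurableSet_Ioi).mp h
  rw [add_mul_igtKernel g hθ hlam.le hx, smul_eq_mul]

theorem integral_add_mul_igtKernel (hθ : 0 < θ) (hlam : 0 < lam) :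
    ∫ x in Ioi 0, (x + θ) * igtKernel g θ lam x = 2 * θ * ∫ t in Ioi 0, g t / √t := by
  have hs : 0 < √lam := Real.sqrt_pos.mpr hlam
  calc ∫ x in Ioi 0, (x + θ) * igtKernel g θ lam x
      = 2 * √lam * ∫ x in Ioi 0,
          ((x + θ) / (2 * x * √x)) • g ((√lam / θ * ((x - θ) / √x)) ^ 2) := by
        rw [← integral_const_mul]
        exact setIntegral_congr_fun measurableSet_Ioi fun x hx =>
          add_mul_igtKernel g hθ hlam.le hx
    _ = 2 * √lam * ∫ y, g ((√lam / θ * y) ^ 2) := by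
        rw [integral_Ioi_comp_sub_div_sqrt hθ (fun y => g ((√lam / θ * y) ^ 2))]
    _ = 2 * θ * ∫ t in Ioi 0, g t / √t := by
        rw [Measure.integral_comp_mul_left (fun y => g (y ^ 2)), integral_comp_sq, smul_eq_mul,
          abs_of_pos (by positivity)]
        field_simp

theorem integrableOn_mul_igtKernel (hg : IntegrableOn (fun t => g t / √t) (Ioi 0))
    (hθ : 0 < θ) (hlam : 0 < lam) :
    IntegrableOn (fun x => x * igtKernel g θ lam x) (Ioi 0) :=
  integrableOn_mul_of_abs_le_mul_add (M := 1) hθ measurable_id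
    (fun x hx => by have : 0 < x := hx; rw [abs_of_pos this]; linarith)
    (integrableOn_add_mul_igtKernel hg hθ hlam)

theorem integrableOn_const_mul_igtKernel (hg : IntegrableOn (fun t => g t / √t) (Ioi 0))
    (hθ : 0 < θ) (hlam : 0 < lam) :
    IntegrableOn (fun x => θ * igtKernel g θ lam x) (Ioi 0) :=
  integrableOn_mul_of_abs_le_mul_add (M := 1) hθ measurable_const
    (fun x hx => by have : 0 < x := hx; rw [abs_of_pos hθ]; linarith)
    (integrableOn_add_mul_igtKernel hg hθ hlam)

theorem integral_mul_igtKernel (hg : IntegrableOn (fun t => g t / √t) (Ioi 0))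
    (hθ : 0 < θ) (hlam : 0 < lam) :
    ∫ x in Ioi 0, x * igtKernel g θ lam x = θ * ∫ t in Ioi 0, g t / √t := by
  -- the inversion `x ↦ θ ^ 2 / x` fixes the argument of `g`
  have hinv : ∫ x in Ioi 0, x * igtKernel g θ lam x =
      ∫ x in Ioi 0, θ * igtKernel g θ lam x := by
    rw [← integral_comp_div_Ioi (pow_pos hθ 2)]
    exact setIntegral_congr_fun measurableSet_Ioi fun x hx => mul_igtKernel_sq_div g hθ hx
  have hsum := integral_add_mul_igtKernel (g := g) hθ hlam
  simp_rw [add_mul] at hsum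
  rw [integral_add (integrableOn_mul_igtKernel hg hθ hlam)
    (integrableOn_const_mul_igtKernel hg hθ hlam), ← hinv] at hsum
  linarith

end IGT

theorem igt_expectation_exists_and_equals_theta_general
    (g : ℝ → ℝ)
    (C : ℝ) (hC : C = ∫ t in Set.Ioi (0 : ℝ), g t / Real.sqrt t)
    (hCfin : IntegrableOn (fun t => g t / Real.sqrt t) (Set.Ioi (0 : ℝ)))
    (hC0 : 0 < C) :
    IntegrableOn (fun t => g t / Real.sqrt (t + 1)) (Set.Ioi (0 : ℝ)) ∧
      ∀ θ lam : ℝ, 0 < θ → 0 < lam →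
        IntegrableOn (fun x =>
            x * (C⁻¹ * Real.sqrt (lam / x ^ 3) * g (lam * (x - θ) ^ 2 / (θ ^ 2 * x))))
          (Set.Ioi (0 : ℝ)) ∧
        ∫ x in Set.Ioi (0 : ℝ),
            x * (C⁻¹ * Real.sqrt (lam / x ^ 3) * g (lam * (x - θ) ^ 2 / (θ ^ 2 * x))) = θ := by
  refine ⟨integrableOn_div_sqrt_add zero_le_one hCfin, fun θ lam hθ hlam => ?_⟩
  have hdensity : ∀ x, x * (C⁻¹ * √(lam / x ^ 3) * g (lam * (x - θ) ^ 2 / (θ ^ 2 * x))) =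
      C⁻¹ * (x * igtKernel g θ lam x) := fun x => by rw [igtKernel]; ring
  simp only [hdensity]
  refine ⟨(integrableOn_mul_igtKernel hCfin hθ hlam).const_mul C⁻¹, ?_⟩
  rw [integral_const_mul, integral_mul_igtKernel hCfin hθ hlam, ← hC]
  field_simp

theorem igt_expectation_exists_and_equals_theta
    (g : ℝ → ℝ) (hg : Measurable g) (hg0 : ∀ t, 0 ≤ g t)
    (C : ℝ) (hC : C = ∫ t in Set.Ioi (0 : ℝ), g t / Real.sqrt t)
    (hCfin : IntegrableOn (fun t => g t / Real.sqrt t) (Set.Ioi (0 : ℝ)))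
    (hC0 : 0 < C) :
    IntegrableOn (fun t => g t / Real.sqrt (t + 1)) (Set.Ioi (0 : ℝ)) ∧
      ∀ θ lam : ℝ, 0 < θ → 0 < lam →
        IntegrableOn (fun x =>
            x * (C⁻¹ * Real.sqrt (lam / x ^ 3) * g (lam * (x - θ) ^ 2 / (θ ^ 2 * x))))
          (Set.Ioi (0 : ℝ)) ∧
        ∫ x in Set.Ioi (0 : ℝ),
            x * (C⁻¹ * Real.sqrt (lam / x ^ 3) * g (lam * (x - θ) ^ 2 / (θ ^ 2 * x))) = θ :=
  igt_expectation_exists_and_equals_theta_general g C hC hCfin hC0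
end
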